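/- arXiv:1604.05551 — 2 statements merged into one kernel-verified Lean document; each statement's English description precedes it below -/
import Mathlib

section
/- Let U : S(ℝⁿ) → S(ℝⁿ) be a bijection satisfying, for all f, g ∈ S(ℝⁿ): (1) U(f + ḡ) = U(f) + conj(U(g)), (2) U(f·g) = U(f)·U(g), (3) U(f ∗ g) = U(f) ∗ U(g). Then for every x₀ ∈ ℝⁿ there exists y₀ ∈ ℝⁿ such that for every f ∈ S(ℝⁿ): f(x₀) ≠ 0 if and only if Uf(y₀) ≠ 0. -/
/-!
A bijection `V` of `𝓢(E, ℂ)` preserving pointwise products fixes `0`, hence sends nonzero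
functions to nonzero functions. Take bumps `φₖ` around `p` with `φₖ φₖ₊₁ = φₖ₊₁`: then
`V φₖ = 1` wherever `V φₖ₊₁ ≠ 0`, so the level sets `{V φₖ = 1}` form a decreasing sequence of
nonempty compact sets (Schwartz functions vanish at infinity), with a common point `q`.
If `f p ≠ 0`, then `φₖ = f · (φₖ / f)` with `φₖ / f` Schwartz for `k` large, so
`V f q * V (φₖ / f) q = 1`.

Applied to `V⁻¹`, which also preserves products, this gives a point `p'` with `f p' ≠ 0`
whenever `V f q ≠ 0`; thus `f p ≠ 0 → f p' ≠ 0` for every Schwartz `f`, and bumps force `p' = p`.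
-/

open SchwartzMap Complex Metric
open scoped ContDiff

variable {E : Type*} [NormedAddCommGroup E] [NormedSpace ℝ E]

namespace SchwartzMap

theorem isCompact_setOf_apply_eq [ProperSpace E] {F : Type*} [NormedAddCommGroup F]
    [NormedSpace ℝ F] (g : 𝓢(E, F)) {c : F} (hc : c ≠ 0) : IsCompact {x | g x = c} := by
  obtain ⟨K, hK, hKc⟩ := Filter.mem_cocompact.1 <|
    g.tendsto_cocompact.eventually (isClosed_singleton.isOpen_compl.mem_nhds hc.symm)
  exact hK.of_isClosed_subset (isClosed_eq g.continuous continuous_const)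
    fun x hx => by_contra fun hxK => hKc hxK hx

theorem exists_mul_eq_of_hasCompactSupport (φ f : 𝓢(E, ℂ)) (hφ : HasCompactSupport φ)
    (hf : ∀ x ∈ tsupport φ, f x ≠ 0) : ∃ H : 𝓢(E, ℂ), ∀ x, φ x = f x * H x := by
  have hsmooth : ContDiff ℝ ∞ fun x => φ x * (f x)⁻¹ := by
    refine contDiff_iff_contDiffAt.2 fun x => ?_
    by_cases hx : x ∈ tsupport φ
    · exact φ.smooth'.contDiffAt.mul (f.smooth'.contDiffAt.inv (hf x hx))
    · refine (contDiffAt_const (c := (0 : ℂ))).congr_of_eventuallyEq ?_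
      filter_upwards [notMem_tsupport_iff_eventuallyEq.1 hx] with y hy
      simp [hy]
  refine ⟨hφ.mul_right.toSchwartzMap hsmooth, fun x => ?_⟩
  by_cases hx : x ∈ tsupport φ
  · simp [mul_left_comm, hf x hx]
  · simp [image_eq_zero_of_notMem_tsupport hx]

end SchwartzMap

def PreservesPointwiseMul (V : 𝓢(E, ℂ) → 𝓢(E, ℂ)) : Prop :=
  ∀ f g h : 𝓢(E, ℂ), (∀ x, h x = f x * g x) → ∀ x, V h x = V f x * V g x

namespace PreservesPointwiseMul

variable {V : 𝓢(E, ℂ) → 𝓢(E, ℂ)}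

theorem map_zero (hV : PreservesPointwiseMul V) (hsurj : Function.Surjective V) : V 0 = 0 := by
  obtain ⟨g, hg⟩ := hsurj 0
  ext x
  rw [hV 0 g 0 (fun _ => (zero_mul _).symm) x, hg, zero_apply, mul_zero]

theorem map_ne_zero (hV : PreservesPointwiseMul V) (hbij : Function.Bijective V)
    {f : 𝓢(E, ℂ)} (hf : f ≠ 0) : V f ≠ 0 :=
  fun h => hf (hbij.1 (h.trans (hV.map_zero hbij.2).symm))

theorem symm (e : 𝓢(E, ℂ) ≃ 𝓢(E, ℂ)) (he : PreservesPointwiseMul e) :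
    PreservesPointwiseMul e.symm := by
  intro f g h hfg x
  let fg := pairing (ContinuousLinearMap.mul ℂ ℂ) (e.symm f) (e.symm g)
  have : e fg = h := by
    ext y
    simp [he _ _ fg (fun _ => rfl) y, hfg y]
  rw [← this, e.symm_apply_apply]
  rfl

end PreservesPointwiseMul

variable [FiniteDimensional ℝ E]

noncomputable def ContDiffBump.toSchwartzMap {p : E} (φ : ContDiffBump p) : 𝓢(E, ℂ) :=
  (φ.hasCompactSupport.comp_left ofReal_zero).toSchwartzMap (ofRealCLM.contDiff.comp φ.contDiff)

@[simp]
theorem ContDiffBump.toSchwartzMap_apply {p : E} (φ : ContDiffBump p) (x : E) :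
    φ.toSchwartzMap x = φ x := rfl

theorem ContDiffBump.tsupport_toSchwartzMap_subset {p : E} (φ : ContDiffBump p) :
    tsupport φ.toSchwartzMap ⊆ closedBall p φ.rOut :=
  (tsupport_comp_subset ofReal_zero φ).trans φ.tsupport_eq.subset

noncomputable def nestedBump (p : E) (k : ℕ) : ContDiffBump p where
  rIn := (1 / 2) ^ (k + 1)
  rOut := (1 / 2) ^ k
  rIn_pos := by positivity
  rIn_lt_rOut := pow_lt_pow_right_of_lt_one₀ (by norm_num) (by norm_num) k.lt_succ_self

theorem nestedBump_mul_succ (p : E) (k : ℕ) (x : E) :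
    nestedBump p k x * nestedBump p (k + 1) x = nestedBump p (k + 1) x := by
  by_cases hx : x ∈ closedBall p ((1 / 2) ^ (k + 1))
  · rw [(nestedBump p k).one_of_mem_closedBall hx, one_mul]
  · rw [(nestedBump p (k + 1)).zero_of_le_dist (not_lt.1 fun h => hx (mem_closedBall.2 h.le)),
      mul_zero]

theorem nestedBump_apply_self (p : E) (k : ℕ) : nestedBump p k p = 1 :=
  (nestedBump p k).one_of_mem_closedBall (mem_closedBall_self (nestedBump p k).rIn_pos.le)

theorem nestedBump_toSchwartzMap_ne_zero (p : E) (k : ℕ) : (nestedBump p k).toSchwartzMap ≠ 0 :=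
  fun h => by simpa [nestedBump_apply_self] using congrArg (· p) h

theorem eq_of_forall_schwartzMap_ne_zero_imp {x y : E}
    (h : ∀ f : 𝓢(E, ℂ), f x ≠ 0 → f y ≠ 0) : x = y := by
  by_contra hxy
  obtain ⟨k, -, hk⟩ := (nhds_basis_closedBall_pow (by norm_num : (0 : ℝ) < 1 / 2)
    (by norm_num)).mem_iff.1 (isOpen_ne.mem_nhds hxy)
  refine h (nestedBump x k).toSchwartzMap (by simp [nestedBump_apply_self]) ?_
  exact image_eq_zero_of_notMem_tsupport fun hy =>
    hk ((nestedBump x k).tsupport_toSchwartzMap_subset hy) rfl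

namespace PreservesPointwiseMul

variable {V : 𝓢(E, ℂ) → 𝓢(E, ℂ)}

theorem exists_forall_nestedBump_eq_one (hV : PreservesPointwiseMul V)
    (hbij : Function.Bijective V) (p : E) :
    ∃ q, ∀ k, V (nestedBump p k).toSchwartzMap q = 1 := by
  set F := fun k => V (nestedBump p k).toSchwartzMap
  have hsucc : ∀ k y, F (k + 1) y ≠ 0 → F k y = 1 := fun k y hy =>
    mul_right_cancel₀ hy <| by
      rw [← hV _ _ (nestedBump p (k + 1)).toSchwartzMap
        (fun x => by simp [← ofReal_mul, nestedBump_mul_succ]) y, one_mul]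
  have hne : ∀ k, ∃ y, F k y ≠ 0 := fun k => by
    by_contra! h
    exact hV.map_ne_zero hbij (nestedBump_toSchwartzMap_ne_zero p k) (SchwartzMap.ext h)
  obtain ⟨q, hq⟩ := IsCompact.nonempty_iInter_of_sequence_nonempty_isCompact_isClosed
    (fun k => {y | F k y = 1}) (fun k y hy => hsucc k y (by simp [hy.out]))
    (fun k => (hne (k + 1)).imp (hsucc k)) ((F 0).isCompact_setOf_apply_eq one_ne_zero)
    (fun k => isClosed_eq (F k).continuous continuous_const)
  exact ⟨q, fun k => (Set.mem_iInter.1 hq k :)⟩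

theorem apply_ne_zero_of_forall_nestedBump_eq_one (hV : PreservesPointwiseMul V) {p q : E}
    (hq : ∀ k, V (nestedBump p k).toSchwartzMap q = 1) {f : 𝓢(E, ℂ)} (hf : f p ≠ 0) :
    V f q ≠ 0 := by
  obtain ⟨k, -, hk⟩ := (nhds_basis_closedBall_pow (by norm_num : (0 : ℝ) < 1 / 2)
    (by norm_num)).mem_iff.1 ((f.continuous.isOpen_preimage _ isOpen_ne).mem_nhds hf)
  obtain ⟨H, hH⟩ := exists_mul_eq_of_hasCompactSupport (nestedBump p k).toSchwartzMap f
    ((nestedBump p k).hasCompactSupport.comp_left ofReal_zero)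
    fun x hx => hk ((nestedBump p k).tsupport_toSchwartzMap_subset hx)
  exact left_ne_zero_of_mul_eq_one (by rw [← hV _ _ _ hH, hq k])

theorem exists_forall_apply_ne_zero (hV : PreservesPointwiseMul V) (hbij : Function.Bijective V)
    (p : E) : ∃ q, ∀ f : 𝓢(E, ℂ), f p ≠ 0 → V f q ≠ 0 :=
  (hV.exists_forall_nestedBump_eq_one hbij p).imp fun _ hq _ =>
    hV.apply_ne_zero_of_forall_nestedBump_eq_one hq

end PreservesPointwiseMul

theorem stmt_5_general (n : ℕ)
    (U : SchwartzMap (EuclideanSpace ℝ (Fin n)) ℂ → SchwartzMap (EuclideanSpace ℝ (Fin n)) ℂ)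
    (hUbij : Function.Bijective U)
    (h2 : ∀ f g h : SchwartzMap (EuclideanSpace ℝ (Fin n)) ℂ,
      (∀ x, h x = f x * g x) → ∀ x, U h x = U f x * U g x) :
    ∀ x₀ : EuclideanSpace ℝ (Fin n), ∃ y₀ : EuclideanSpace ℝ (Fin n),
      ∀ f : SchwartzMap (EuclideanSpace ℝ (Fin n)) ℂ,
        f x₀ ≠ 0 ↔ U f y₀ ≠ 0 := by
  intro x₀
  let e := Equiv.ofBijective U hUbij
  obtain ⟨y₀, hy₀⟩ := PreservesPointwiseMul.exists_forall_apply_ne_zero h2 hUbij x₀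
  obtain ⟨x₁, hx₁⟩ := (PreservesPointwiseMul.symm e h2).exists_forall_apply_ne_zero
    e.symm.bijective y₀
  have hback : ∀ f, U f y₀ ≠ 0 → f x₁ ≠ 0 := fun f hf => by
    simpa only [e.symm_apply_apply] using hx₁ (e f) hf
  obtain rfl : x₀ = x₁ := eq_of_forall_schwartzMap_ne_zero_imp fun f hf => hback f (hy₀ f hf)
  exact ⟨y₀, fun f => ⟨hy₀ f, hback f⟩⟩

theorem stmt_5 (n : ℕ)
    (U : SchwartzMap (EuclideanSpace ℝ (Fin n)) ℂ → SchwartzMap (EuclideanSpace ℝ (Fin n)) ℂ)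
    (hUbij : Function.Bijective U)
    (h1 : ∀ f g h : SchwartzMap (EuclideanSpace ℝ (Fin n)) ℂ,
      (∀ x, h x = f x + starRingEnd ℂ (g x)) →
      ∀ x, U h x = U f x + starRingEnd ℂ (U g x))
    (h2 : ∀ f g h : SchwartzMap (EuclideanSpace ℝ (Fin n)) ℂ,
      (∀ x, h x = f x * g x) → ∀ x, U h x = U f x * U g x)
    (h3 : ∀ f g h : SchwartzMap (EuclideanSpace ℝ (Fin n)) ℂ,
      (∀ x, h x = ∫ y, f (x - y) * g y) →
      ∀ x, U h x = ∫ y, U f (x - y) * U g y) :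
    ∀ x₀ : EuclideanSpace ℝ (Fin n), ∃ y₀ : EuclideanSpace ℝ (Fin n),
      ∀ f : SchwartzMap (EuclideanSpace ℝ (Fin n)) ℂ,
        f x₀ ≠ 0 ↔ U f y₀ ≠ 0 :=
  stmt_5_general n U hUbij h2
end

section
/- Let U : S(ℝⁿ) → S(ℝⁿ) be a bijection satisfying, for all f, g ∈ S(ℝⁿ): (1) U(f + ḡ) = U(f) + conj(U(g)), (2) U(f·g) = U(f)·U(g), (3) U(f ∗ g) = U(f) ∗ U(g). Suppose A : ℝⁿ → ℝⁿ is a bijection such that for every f ∈ S(ℝⁿ) and every x₀ ∈ ℝⁿ, f(x₀) = 0 if and only if Uf(A x₀) = 0, and suppose m : ℂ → ℂ satisfies U(c·f) = m(c) · Uf for all c ∈ ℂ and f ∈ S(ℝⁿ). Then Uf(A x₀) = m(f(x₀)) for every f ∈ S(ℝⁿ) and every x₀ ∈ ℝⁿ. -/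
/-!
Additivity of `U` follows from (1) applied with `f = 0`, which makes `U` commute with conjugation.
Fix `x₀` and a Schwartz function `g` with `g x₀ ≠ 0`. For any `f`, the function `f·g - f(x₀)·g`
vanishes at `x₀`, so its image vanishes at `A x₀`; by additivity and multiplicativity this reads
`Uf(A x₀)·Ug(A x₀) = m(f x₀)·Ug(A x₀)`, and `Ug(A x₀) ≠ 0` because `g x₀ ≠ 0`.
-/

open SchwartzMap Complex

namespace SchwartzMap

variable {E : Type*} [NormedAddCommGroup E] [NormedSpace ℝ E]

noncomputable def conj (f : 𝓢(E, ℂ)) : 𝓢(E, ℂ) :=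
  postcompCLM (𝕜 := ℝ) conjCLE.toContinuousLinearMap f

@[simp]
theorem conj_apply (f : 𝓢(E, ℂ)) (x : E) : f.conj x = starRingEnd ℂ (f x) := rfl

noncomputable def mul (f g : 𝓢(E, ℂ)) : 𝓢(E, ℂ) :=
  pairing (ContinuousLinearMap.mul ℂ ℂ) f g

@[simp]
theorem mul_apply (f g : 𝓢(E, ℂ)) (x : E) : f.mul g x = f x * g x := rfl

theorem exists_apply_ne_zero [FiniteDimensional ℝ E] (x₀ : E) : ∃ g : 𝓢(E, ℂ), g x₀ ≠ 0 := by
  let b : ContDiffBump x₀ := ⟨1, 2, one_pos, one_lt_two⟩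
  refine ⟨(b.hasCompactSupport.comp_left ofReal_zero).toSchwartzMap
    (ofRealCLM.contDiff.comp b.contDiff), ?_⟩
  exact ofReal_ne_zero.2 (b.pos_of_mem_ball (Metric.mem_ball_self b.rOut_pos)).ne'

end SchwartzMap

section ConjAdditive

variable {E : Type*} [NormedAddCommGroup E] [NormedSpace ℝ E] {U : 𝓢(E, ℂ) → 𝓢(E, ℂ)}
  (hU : ∀ f g h : 𝓢(E, ℂ), (∀ x, h x = f x + starRingEnd ℂ (g x)) →
    ∀ x, U h x = U f x + starRingEnd ℂ (U g x))
include hU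

theorem apply_zero_of_map_add_conj (x : E) : U 0 x = 0 := by
  have h := hU 0 0 0 (fun _ => by simp) x
  simpa using h

theorem map_conj_apply_of_map_add_conj (f : 𝓢(E, ℂ)) (x : E) :
    U f.conj x = starRingEnd ℂ (U f x) := by
  rw [hU 0 f f.conj (fun _ => by simp) x, apply_zero_of_map_add_conj hU, zero_add]

theorem map_add_apply_of_map_add_conj (f g : 𝓢(E, ℂ)) (x : E) :
    U (f + g) x = U f x + U g x := by
  rw [hU f g.conj (f + g) (fun _ => by simp) x, map_conj_apply_of_map_add_conj hU,
    Complex.conj_conj]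

end ConjAdditive

theorem apply_eq_of_map_add_of_map_mul {E : Type*} [NormedAddCommGroup E] [NormedSpace ℝ E]
    {U : 𝓢(E, ℂ) → 𝓢(E, ℂ)} {m : ℂ → ℂ}
    (hadd : ∀ f g : 𝓢(E, ℂ), ∀ x, U (f + g) x = U f x + U g x)
    (hmul : ∀ f g h : 𝓢(E, ℂ), (∀ x, h x = f x * g x) → ∀ x, U h x = U f x * U g x)
    (hsmul : ∀ (c : ℂ) (f : 𝓢(E, ℂ)) x, U (c • f) x = m c * U f x)
    {x₀ y₀ : E} (hzero : ∀ f : 𝓢(E, ℂ), f x₀ = 0 ↔ U f y₀ = 0)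
    {g : 𝓢(E, ℂ)} (hg : g x₀ ≠ 0) (f : 𝓢(E, ℂ)) :
    U f y₀ = m (f x₀) := by
  have hUg : U g y₀ ≠ 0 := fun h => hg ((hzero g).2 h)
  have hvanish : U (f.mul g - f x₀ • g) y₀ = 0 := (hzero _).1 (by simp)
  have hsplit : U f y₀ * U g y₀ = m (f x₀) * U g y₀ := by
    rw [← hmul f g (f.mul g) (fun _ => rfl), ← hsmul, ← sub_add_cancel (f.mul g) (f x₀ • g),
      hadd, hvanish, zero_add]
  exact mul_right_cancel₀ hUg hsplit

theorem stmt_13_general (n : ℕ)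
    (U : SchwartzMap (EuclideanSpace ℝ (Fin n)) ℂ → SchwartzMap (EuclideanSpace ℝ (Fin n)) ℂ)
    (h1 : ∀ f g h : SchwartzMap (EuclideanSpace ℝ (Fin n)) ℂ,
      (∀ x, h x = f x + starRingEnd ℂ (g x)) →
      ∀ x, U h x = U f x + starRingEnd ℂ (U g x))
    (h2 : ∀ f g h : SchwartzMap (EuclideanSpace ℝ (Fin n)) ℂ,
      (∀ x, h x = f x * g x) → ∀ x, U h x = U f x * U g x)
    (A : EuclideanSpace ℝ (Fin n) → EuclideanSpace ℝ (Fin n))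
    (hA : ∀ (f : SchwartzMap (EuclideanSpace ℝ (Fin n)) ℂ) (x₀ : EuclideanSpace ℝ (Fin n)),
      f x₀ = 0 ↔ U f (A x₀) = 0)
    (m : ℂ → ℂ)
    (hm : ∀ (c : ℂ) (f : SchwartzMap (EuclideanSpace ℝ (Fin n)) ℂ)
      (x : EuclideanSpace ℝ (Fin n)), U (c • f) x = m c * U f x) :
    ∀ (f : SchwartzMap (EuclideanSpace ℝ (Fin n)) ℂ) (x₀ : EuclideanSpace ℝ (Fin n)),
      U f (A x₀) = m (f x₀) := by
  intro f x₀
  obtain ⟨g, hg⟩ := exists_apply_ne_zero x₀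
  exact apply_eq_of_map_add_of_map_mul (map_add_apply_of_map_add_conj h1) h2 hm
    (fun f => hA f x₀) hg f

theorem stmt_13 (n : ℕ)
    (U : SchwartzMap (EuclideanSpace ℝ (Fin n)) ℂ → SchwartzMap (EuclideanSpace ℝ (Fin n)) ℂ)
    (hUbij : Function.Bijective U)
    (h1 : ∀ f g h : SchwartzMap (EuclideanSpace ℝ (Fin n)) ℂ,
      (∀ x, h x = f x + starRingEnd ℂ (g x)) →
      ∀ x, U h x = U f x + starRingEnd ℂ (U g x))
    (h2 : ∀ f g h : SchwartzMap (EuclideanSpace ℝ (Fin n)) ℂ,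
      (∀ x, h x = f x * g x) → ∀ x, U h x = U f x * U g x)
    (h3 : ∀ f g h : SchwartzMap (EuclideanSpace ℝ (Fin n)) ℂ,
      (∀ x, h x = ∫ y, f (x - y) * g y) →
      ∀ x, U h x = ∫ y, U f (x - y) * U g y)
    (A : EuclideanSpace ℝ (Fin n) → EuclideanSpace ℝ (Fin n))
    (hAbij : Function.Bijective A)
    (hA : ∀ (f : SchwartzMap (EuclideanSpace ℝ (Fin n)) ℂ) (x₀ : EuclideanSpace ℝ (Fin n)),
      f x₀ = 0 ↔ U f (A x₀) = 0)
    (m : ℂ → ℂ)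
    (hm : ∀ (c : ℂ) (f : SchwartzMap (EuclideanSpace ℝ (Fin n)) ℂ)
      (x : EuclideanSpace ℝ (Fin n)), U (c • f) x = m c * U f x) :
    ∀ (f : SchwartzMap (EuclideanSpace ℝ (Fin n)) ℂ) (x₀ : EuclideanSpace ℝ (Fin n)),
      U f (A x₀) = m (f x₀) :=
  stmt_13_general n U h1 h2 A hA m hm
end
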